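/- arXiv:math/0611057 — 4 statements merged into one kernel-verified Lean document; each statement's English description precedes it below -/
import Mathlib

section
/- For real x with 0 < x < π, 1 − x·cot(x) = (x²/3)·(1/(1 − (x²/15)/(1 − (x²/35)/(1 − ···)))), i.e., the continued fraction with coefficients c₀ = 1/3 and c_n = −1/((2n+1)(2n+3)) for n ≥ 1 converges to 1 − x cot x. -/
/-!
`S_n` and `S_n - R_n` are even polynomials in `x` with explicit coefficients `CotCF.coeff 0 n k`
and `CotCF.coeff 1 n k`, which satisfy the three-term recurrence coefficientwise. For fixed `k`
the coefficient of `x^(2k)` tends to `(-1)^k / (2k+1)!`, resp. `(-1)^k / (2k)!`, and is bounded by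
`1 / k!` uniformly in `n`. By Tannery's theorem `x S_n → sin x` and `S_n - R_n → cos x`, hence
`R_n / S_n → (sin x - x cos x) / sin x = 1 - x cot x`.
-/

open Real Filter Finset Nat Topology

theorem eq_of_two_step_recurrence {α : Type*} (f : ℕ → α → α → α) {u v : ℕ → α}
    (hu : ∀ n, u (n + 2) = f n (u n) (u (n + 1))) (hv : ∀ n, v (n + 2) = f n (v n) (v (n + 1)))
    (h0 : u 0 = v 0) (h1 : u 1 = v 1) : u = v := by
  have h : ∀ n, u n = v n ∧ u (n + 1) = v (n + 1) := fun n => by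
    induction n with
    | zero => exact ⟨h0, h1⟩
    | succ n ih => exact ⟨ih.2, by rw [hu, hv, ih.1, ih.2]⟩
  exact funext fun n => (h n).1

theorem Nat.doubleFactorial_two_mul_add_add_one (a k : ℕ) :
    (2 * (a + k) + 1)‼ = (2 * a + 1)‼ * ∏ j ∈ range k, (2 * (a + j) + 3) := by
  induction k with
  | zero => simp
  | succ k ih =>
    rw [prod_range_succ, ← mul_assoc, ← ih,
      show 2 * (a + (k + 1)) + 1 = 2 * (a + k) + 1 + 2 by ring, Nat.doubleFactorial_add_two]
    ring

namespace CotCF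

/-- `e = 0` gives the coefficients of `S_n`, `e = 1` those of `S_n - R_n`. For `n < k` the
truncated subtractions are harmless: the descending factorial vanishes. -/
noncomputable def coeff (e n k : ℕ) : ℝ :=
  (-1) ^ k * 2 ^ k * (n + e - k).descFactorial k * (2 * (n - k) + 1)‼ /
    ((2 * k + 1 - e)! * (2 * n + 1)‼)

noncomputable def poly (e n : ℕ) (x : ℝ) : ℝ := ∑' k, coeff e n k * x ^ (2 * k)

lemma coeff_zero_right (e n : ℕ) : coeff e n 0 = 1 := by
  have : ((2 * n + 1)‼ : ℝ) ≠ 0 := by positivity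
  simp [coeff, Nat.factorial_eq_one.2 (Nat.sub_le 1 e), this]

lemma coeff_eq_zero {e n k : ℕ} (h : n + e < 2 * k) : coeff e n k = 0 := by
  simp [coeff, Nat.descFactorial_eq_zero_iff_lt.2 (show n + e - k < k by omega)]

lemma coeff_add_self (e a k : ℕ) :
    coeff e (a + k) k = (-1) ^ k * 2 ^ k * (a + e).descFactorial k * (2 * a + 1)‼ /
      ((2 * k + 1 - e)! * (2 * (a + k) + 1)‼) := by
  simp only [coeff, show a + k + e - k = a + e by omega, Nat.add_sub_cancel]

lemma coeff_add_self_eq_prod (e a k : ℕ) :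
    coeff e (a + k) k = (-1) ^ k / (2 * k + 1 - e)! *
      ∏ j ∈ range k, 2 * ((a : ℝ) + e - j) / (2 * (a + j) + 3) := by
  rw [coeff_add_self, Nat.doubleFactorial_two_mul_add_add_one, prod_div_distrib,
    prod_mul_distrib, prod_const, card_range, ← descPochhammer_eval_eq_prod_range,
    show ((a : ℝ) + e) = ((a + e : ℕ) : ℝ) by push_cast; ring, descPochhammer_eval_eq_descFactorial]
  have : ((2 * a + 1)‼ : ℝ) ≠ 0 := by positivity
  have : (∏ j ∈ range k, (2 * ((a : ℝ) + j) + 3)) ≠ 0 :=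
    prod_ne_zero_iff.2 fun j _ => by positivity
  push_cast
  field_simp

lemma abs_coeff_le {e : ℕ} (he : e ≤ 1) (n k : ℕ) : |coeff e n k| ≤ 1 / (2 * k + 1 - e)! := by
  rcases le_or_gt k n with hkn | hnk
  · obtain ⟨a, rfl⟩ := Nat.exists_eq_add_of_le' hkn
    have hfactor (j : ℕ) : |2 * ((a : ℝ) + e - j) / (2 * (a + j) + 3)| ≤ 1 := by
      have : (e : ℝ) ≤ 1 := by exact_mod_cast he
      rw [abs_div, abs_of_pos (by positivity : (0 : ℝ) < 2 * (a + j) + 3),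
        div_le_one (by positivity), abs_le]
      constructor <;> nlinarith [(j.cast_nonneg : (0 : ℝ) ≤ j), (a.cast_nonneg : (0 : ℝ) ≤ a),
        (e.cast_nonneg : (0 : ℝ) ≤ e)]
    rw [coeff_add_self_eq_prod, abs_mul, abs_div, abs_pow, abs_neg, abs_one, one_pow,
      Nat.abs_cast]
    refine mul_le_of_le_one_right (by positivity) ?_
    rw [abs_prod]
    exact prod_le_one (fun j _ => abs_nonneg _) fun j _ => hfactor j
  · rw [coeff_eq_zero (by omega), abs_zero]
    positivity

lemma tendsto_coeff (e k : ℕ) :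
    Tendsto (fun n => coeff e n k) atTop (𝓝 ((-1) ^ k / (2 * k + 1 - e)!)) := by
  rw [← tendsto_add_atTop_iff_nat k]
  simp_rw [coeff_add_self_eq_prod]
  have hfactor (j : ℕ) : Tendsto (fun a : ℕ => 2 * ((a : ℝ) + e - j) / (2 * (a + j) + 3))
      atTop (𝓝 1) := by
    have := tendsto_add_mul_div_add_mul_atTop_nhds (2 * ((e : ℝ) - j)) (2 * j + 3) 2
      (two_ne_zero (α := ℝ))
    rw [div_self two_ne_zero] at this
    exact this.congr fun a => by ring_nf
  simpa using (tendsto_finsetProd (range k) fun j _ => hfactor j).const_mul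
    ((-1) ^ k / (2 * k + 1 - e)! : ℝ)

lemma factorial_two_mul_succ_add_one_sub {e : ℕ} (he : e ≤ 1) (k : ℕ) :
    ((2 * (k + 1) + 1 - e)! : ℝ) = 2 * (k + 1) * (2 * k + 3 - 2 * e) * (2 * k + 1 - e)! := by
  rcases Nat.le_one_iff_eq_zero_or_eq_one.1 he with rfl | rfl
  · rw [show 2 * (k + 1) + 1 - 0 = 2 * k + 1 + 1 + 1 by omega, Nat.factorial_succ,
      Nat.factorial_succ]
    push_cast
    ring
  · rw [show 2 * (k + 1) + 1 - 1 = 2 * k + 1 + 1 by omega, show 2 * k + 1 - 1 = 2 * k by omega,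
      Nat.factorial_succ, Nat.factorial_succ]
    push_cast
    ring

lemma coeff_succ_succ {e : ℕ} (he : e ≤ 1) (n k : ℕ) :
    coeff e (n + 2) (k + 1) =
      coeff e (n + 1) (k + 1) + -1 / ((2 * (n : ℝ) + 3) * (2 * n + 5)) * coeff e n k := by
  rcases le_or_gt k n with hkn | hnk
  · obtain ⟨a, rfl⟩ := Nat.exists_eq_add_of_le' hkn
    rw [show a + k + 2 = a + 1 + (k + 1) by ring, show a + k + 1 = a + (k + 1) by ring,
      coeff_add_self, coeff_add_self, coeff_add_self, show a + 1 + e = a + e + 1 by ring,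
      Nat.succ_descFactorial_succ, factorial_two_mul_succ_add_one_sub he,
      show 2 * (a + 1) + 1 = 2 * a + 1 + 2 by ring, Nat.doubleFactorial_add_two,
      show 2 * (a + 1 + (k + 1)) + 1 = 2 * (a + k) + 1 + 2 + 2 by ring,
      show 2 * (a + (k + 1)) + 1 = 2 * (a + k) + 1 + 2 by ring, Nat.doubleFactorial_add_two,
      Nat.doubleFactorial_add_two, Nat.cast_mul,
      ← descPochhammer_eval_eq_descFactorial ℝ (a + e) (k + 1), descPochhammer_succ_eval,
      descPochhammer_eval_eq_descFactorial]
    have : ((2 * k + 1 - e)! : ℝ) ≠ 0 := by positivity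
    have : ((2 * (a + k) + 1)‼ : ℝ) ≠ 0 := by positivity
    -- stated in `field_simp`'s normal form so that it is found as a side condition
    have : (2 * k + 3 - e * 2 : ℝ) ≠ 0 := by
      have : (e : ℝ) ≤ 1 := by exact_mod_cast he
      linarith
    push_cast
    field_simp
    ring
  · rw [coeff_eq_zero (by omega), coeff_eq_zero (by omega), coeff_eq_zero (by omega)]
    ring

lemma norm_coeff_mul_pow_le {e : ℕ} (he : e ≤ 1) (n k : ℕ) (x : ℝ) :
    ‖coeff e n k * x ^ (2 * k)‖ ≤ (x ^ 2) ^ k / k ! := by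
  rw [norm_mul, norm_pow, Real.norm_eq_abs, Real.norm_eq_abs, pow_mul, sq_abs, mul_comm,
    div_eq_mul_one_div]
  gcongr
  refine (abs_coeff_le he n k).trans ?_
  gcongr
  omega

lemma summable_coeff_mul_pow {e : ℕ} (he : e ≤ 1) (n : ℕ) (x : ℝ) :
    Summable fun k => coeff e n k * x ^ (2 * k) :=
  (Real.summable_pow_div_factorial _).of_norm_bounded (norm_coeff_mul_pow_le he n · x)

lemma poly_succ_succ {e : ℕ} (he : e ≤ 1) (n : ℕ) (x : ℝ) :
    poly e (n + 2) x =
      poly e (n + 1) x + -1 / ((2 * (n : ℝ) + 3) * (2 * n + 5)) * x ^ 2 * poly e n x := by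
  have hshift : Summable fun k => coeff e (n + 1) (k + 1) * x ^ (2 * (k + 1)) :=
    (summable_nat_add_iff 1).2 (summable_coeff_mul_pow he (n + 1) x)
  simp only [poly]
  rw [(summable_coeff_mul_pow he (n + 2) x).tsum_eq_zero_add,
    (summable_coeff_mul_pow he (n + 1) x).tsum_eq_zero_add, ← tsum_mul_left,
    add_assoc, ← hshift.tsum_add ((summable_coeff_mul_pow he n x).mul_left _)]
  simp only [coeff_zero_right, coeff_succ_succ he]
  congr 1
  exact tsum_congr fun k => by ring

lemma poly_zero {e : ℕ} (he : e ≤ 1) (x : ℝ) : poly e 0 x = 1 := by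
  rw [poly, tsum_eq_single 0 fun k hk => by rw [coeff_eq_zero (by omega), zero_mul],
    coeff_zero_right, pow_zero, mul_one]

lemma poly_zero_one (x : ℝ) : poly 0 1 x = 1 := by
  rw [poly, tsum_eq_single 0 fun k hk => by rw [coeff_eq_zero (by omega), zero_mul],
    coeff_zero_right, pow_zero, mul_one]

lemma poly_one_one (x : ℝ) : poly 1 1 x = 1 - x ^ 2 / 3 := by
  rw [poly, tsum_eq_sum (s := range 2) fun k hk => by
    rw [coeff_eq_zero (by simp at hk; omega), zero_mul]]
  have : coeff 1 1 1 = -1 / 3 := by norm_num [coeff, Nat.doubleFactorial]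
  rw [sum_range_succ, sum_range_one, coeff_zero_right, this]
  ring

lemma tendsto_poly {e : ℕ} (he : e ≤ 1) (x : ℝ) :
    Tendsto (fun n => poly e n x) atTop
      (𝓝 (∑' k, (-1) ^ k / (2 * k + 1 - e)! * x ^ (2 * k))) :=
  tendsto_tsum_of_dominated_convergence (Real.summable_pow_div_factorial (x ^ 2))
    (fun k => (tendsto_coeff e k).mul_const _)
    (Eventually.of_forall fun n k => norm_coeff_mul_pow_le he n k x)

lemma tendsto_mul_poly_zero (x : ℝ) : Tendsto (fun n => x * poly 0 n x) atTop (𝓝 (sin x)) := by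
  have hsin : ∑' k : ℕ, (-1) ^ k / ((2 * k + 1 - 0)! : ℝ) * x ^ (2 * k) * x = sin x :=
    (Real.hasSum_sin x).tsum_eq ▸ tsum_congr fun k => by rw [Nat.sub_zero]; ring
  have := (tendsto_poly zero_le_one x).const_mul x
  rwa [mul_comm, ← tsum_mul_right, hsin] at this

lemma tendsto_poly_one (x : ℝ) : Tendsto (fun n => poly 1 n x) atTop (𝓝 (cos x)) := by
  have hcos : ∑' k : ℕ, (-1) ^ k / ((2 * k + 1 - 1)! : ℝ) * x ^ (2 * k) = cos x :=
    (Real.hasSum_cos x).tsum_eq ▸ tsum_congr fun k => by rw [Nat.add_sub_cancel]; ring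
  simpa only [hcos] using tendsto_poly le_rfl x

end CotCF

open CotCF

/-- `R (n + 1)` and `S (n + 1)` are the paper's `R_n` and `S_n`. -/
theorem cot_continued_fraction_general (x : ℝ) (hx : x ∈ Set.Ioo 0 π)
    (c : ℕ → ℝ)
    (hc : ∀ n : ℕ, c (n + 1) = -1 / ((2 * (n : ℝ) + 3) * (2 * (n : ℝ) + 5)))
    (R S : ℕ → ℝ)
    (hR0 : R 0 = 0) (hR1 : R 1 = x ^ 2 / 3) (hS0 : S 0 = 1) (hS1 : S 1 = 1)
    (hRrec : ∀ n : ℕ, R (n + 2) = R (n + 1) + c (n + 1) * x ^ 2 * R n)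
    (hSrec : ∀ n : ℕ, S (n + 2) = S (n + 1) + c (n + 1) * x ^ 2 * S n) :
    Tendsto (fun n : ℕ => R (n + 1) / S (n + 1)) atTop (nhds (1 - x * Real.cot x)) := by
  obtain ⟨hx0, hxπ⟩ := hx
  have hS : S = fun n => poly 0 n x :=
    eq_of_two_step_recurrence (fun n s t => t + c (n + 1) * x ^ 2 * s) hSrec
      (fun n => by rw [hc, poly_succ_succ zero_le_one]) (by rw [hS0, poly_zero zero_le_one])
      (by rw [hS1, poly_zero_one])
  have hD : (fun n => S n - R n) = fun n => poly 1 n x :=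
    eq_of_two_step_recurrence (fun n s t => t + c (n + 1) * x ^ 2 * s)
      (fun n => by rw [hSrec, hRrec]; ring) (fun n => by rw [hc, poly_succ_succ le_rfl])
      (by rw [hS0, hR0, poly_zero le_rfl, sub_zero]) (by rw [hS1, hR1, poly_one_one])
  have hxS : Tendsto (fun n => x * S (n + 1)) atTop (𝓝 (sin x)) := by
    rw [hS]
    exact (tendsto_add_atTop_iff_nat 1).2 (tendsto_mul_poly_zero x)
  have hxD : Tendsto (fun n => x * (S (n + 1) - R (n + 1))) atTop (𝓝 (x * cos x)) :=
    (((tendsto_add_atTop_iff_nat 1).2 (tendsto_poly_one x)).const_mul x).congr fun n =>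
      congrArg (x * ·) (congrFun hD (n + 1)).symm
  have hsin : sin x ≠ 0 := (sin_pos_of_pos_of_lt_pi hx0 hxπ).ne'
  convert (hxS.sub hxD).div hxS hsin using 1
  · funext n
    rw [Pi.div_apply, ← mul_sub, sub_sub_cancel, mul_div_mul_left _ _ hx0.ne']
  · rw [cot_eq_cos_div_sin]
    field_simp

/-- For `0 < x < π`, the continued fraction with coefficients `c₀ = 1/3`,
`c_n = −1/((2n+1)(2n+3))` for `n ≥ 1` converges to `1 − x·cot x`.  The continued
fraction is the limit of the convergents `R_n/S_n`, where `R` and `S` satisfy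
`R_{n+1} = R_n + c_{n+1} x² R_{n−1}` with `R_{−1} = 0`, `R₀ = x²/3`, `S_{−1} = S₀ = 1`
(here encoded with an index shift so that `R (n+1)` stands for `R_n`). -/
theorem cot_continued_fraction (x : ℝ) (hx : x ∈ Set.Ioo 0 π)
    (c : ℕ → ℝ) (hc0 : c 0 = 1 / 3)
    (hc : ∀ n : ℕ, c (n + 1) = -1 / ((2 * (n : ℝ) + 3) * (2 * (n : ℝ) + 5)))
    (R S : ℕ → ℝ)
    (hR0 : R 0 = 0) (hR1 : R 1 = x ^ 2 / 3) (hS0 : S 0 = 1) (hS1 : S 1 = 1)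
    (hRrec : ∀ n : ℕ, R (n + 2) = R (n + 1) + c (n + 1) * x ^ 2 * R n)
    (hSrec : ∀ n : ℕ, S (n + 2) = S (n + 1) + c (n + 1) * x ^ 2 * S n) :
    Tendsto (fun n : ℕ => R (n + 1) / S (n + 1)) atTop (nhds (1 - x * Real.cot x)) :=
  cot_continued_fraction_general x hx c hc R S hR0 hR1 hS0 hS1 hRrec hSrec
end

section
/- The odd-indexed denominators satisfy the three-term recursion S_{n+3}(x) = (1 − 2x²/((2n+5)(2n+9))) S_{n+1}(x) − (x⁴/((2n+3)(2n+5)²(2n+7))) S_{n−1}(x) for all n ≥ 0. -/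
open Real

/-! Eliminating the odd-position terms of a three-term recurrence `u (n+2) = u (n+1) - c n * u n`
gives a three-term recurrence for every second term, with coefficients `1 - c (n+1) - c (n+2)`
and `c n * c (n+1)`. For `c n = x² / ((2n+3)(2n+5))` the sum of
the two shifted coefficients collapses by partial fractions to `2x² / ((2n+5)(2n+9))`. -/

theorem three_term_recurrence_step_two {R : Type*} [CommRing R] (u c : ℕ → R)
    (h : ∀ n, u (n + 2) = u (n + 1) - c n * u n) (n : ℕ) :
    u (n + 4) = (1 - c (n + 1) - c (n + 2)) * u (n + 2) - c n * c (n + 1) * u n := by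
  have h2 : u (n + 4) = u (n + 3) - c (n + 2) * u (n + 2) := h (n + 2)
  have h1 : u (n + 3) = u (n + 2) - c (n + 1) * u (n + 1) := h (n + 1)
  linear_combination h2 + h1 + c (n + 1) * h n

section Coefficients

variable (x : ℝ) {t : ℝ}

theorem sq_div_add_sq_div_shift (ht : 0 ≤ t) :
    x ^ 2 / ((2 * (t + 1) + 3) * (2 * (t + 1) + 5)) +
        x ^ 2 / ((2 * (t + 2) + 3) * (2 * (t + 2) + 5)) =
      2 * x ^ 2 / ((2 * t + 5) * (2 * t + 9)) := by
  have h5 : 2 * t + 5 ≠ 0 := by positivity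
  have h7 : 2 * t + 7 ≠ 0 := by positivity
  have h9 : 2 * t + 9 ≠ 0 := by positivity
  field_simp
  ring

theorem sq_div_mul_sq_div_shift (ht : 0 ≤ t) :
    x ^ 2 / ((2 * t + 3) * (2 * t + 5)) * (x ^ 2 / ((2 * (t + 1) + 3) * (2 * (t + 1) + 5))) =
      x ^ 4 / ((2 * t + 3) * (2 * t + 5) ^ 2 * (2 * t + 7)) := by
  have h3 : 2 * t + 3 ≠ 0 := by positivity
  have h5 : 2 * t + 5 ≠ 0 := by positivity
  have h7 : 2 * t + 7 ≠ 0 := by positivity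
  field_simp
  ring

end Coefficients

-- `T (n + 1) x` stands for `S_n(x)`, so `T (n + 4)` is `S_{n+3}`.
theorem S_odd_recursion_general (T : ℕ → ℝ → ℝ)
    (hTrec : ∀ (n : ℕ) (x : ℝ),
      T (n + 2) x = T (n + 1) x - x ^ 2 / ((2 * (n : ℝ) + 3) * (2 * (n : ℝ) + 5)) * T n x) :
    ∀ (n : ℕ) (x : ℝ),
      T (n + 4) x =
        (1 - 2 * x ^ 2 / ((2 * (n : ℝ) + 5) * (2 * (n : ℝ) + 9))) * T (n + 2) x -
          x ^ 4 / ((2 * (n : ℝ) + 3) * (2 * (n : ℝ) + 5) ^ 2 * (2 * (n : ℝ) + 7)) * T n x := by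
  intro n x
  have hn : (0 : ℝ) ≤ n := n.cast_nonneg
  have step := three_term_recurrence_step_two (T · x)
    (fun k : ℕ => x ^ 2 / ((2 * (k : ℝ) + 3) * (2 * (k : ℝ) + 5))) (fun k => hTrec k x) n
  push_cast at step
  rw [step, sub_sub, sq_div_add_sq_div_shift x hn, sq_div_mul_sq_div_shift x hn]

/-- The odd-indexed denominators satisfy the three-term recursion
`S_{n+3}(x) = (1 − 2x²/((2n+5)(2n+9))) S_{n+1}(x) − (x⁴/((2n+3)(2n+5)²(2n+7))) S_{n−1}(x)`
for all `n ≥ 0` (encoded as `T (n+1) x = S_n(x)`). -/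
theorem S_odd_recursion (T : ℕ → ℝ → ℝ)
    (hT0 : ∀ x, T 0 x = 1) (hT1 : ∀ x, T 1 x = 1)
    (hTrec : ∀ (n : ℕ) (x : ℝ),
      T (n + 2) x = T (n + 1) x - x ^ 2 / ((2 * (n : ℝ) + 3) * (2 * (n : ℝ) + 5)) * T n x) :
    ∀ (n : ℕ) (x : ℝ),
      T (n + 4) x =
        (1 - 2 * x ^ 2 / ((2 * (n : ℝ) + 5) * (2 * (n : ℝ) + 9))) * T (n + 2) x -
          x ^ 4 / ((2 * (n : ℝ) + 3) * (2 * (n : ℝ) + 5) ^ 2 * (2 * (n : ℝ) + 7)) * T n x :=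
  S_odd_recursion_general T hTrec
end

section
/- Define s_n(z) = z^n · S_{2n−1}(π/√z). Then s_n is a monic-up-to-normalization polynomial of degree n in z, and the normalized sequence satisfies the three-term recursion s̃_{k+1}(z) = (z − a_k) s̃_k(z) − b_k s̃_{k−1}(z) with a_0 = π²/15, a_k = 2π²/((4k+1)(4k+5)) for k ≥ 1, and b_k = π⁴/((4k−1)(4k+1)²(4k+3)) for k ≥ 1. -/
open Real Polynomial

noncomputable def sPol : ℕ → Polynomial ℝ
  | 0 => 1
  | 1 => X - C (π ^ 2 / 15)
  | (k + 2) =>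
      (X - C (2 * π ^ 2 / ((4 * (k : ℝ) + 5) * (4 * (k : ℝ) + 9)))) * sPol (k + 1) -
        C (π ^ 4 / ((4 * (k : ℝ) + 3) * (4 * (k : ℝ) + 5) ^ 2 * (4 * (k : ℝ) + 7))) * sPol k

lemma sPol_monic_deg : ∀ n : ℕ, (sPol n).Monic ∧ (sPol n).natDegree = n := by
  intro n
  induction n using Nat.twoStepInduction with
  | zero => exact ⟨monic_one, natDegree_one⟩
  | one => exact ⟨monic_X_sub_C _, natDegree_X_sub_C _⟩
  | more k ih1 ih2 =>
      obtain ⟨hm1, hd1⟩ := ih1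
      obtain ⟨hm2, hd2⟩ := ih2
      have hmul : ((X - C (2 * π ^ 2 / ((4 * (k : ℝ) + 5) * (4 * (k : ℝ) + 9)))) *
          sPol (k + 1)).Monic := (monic_X_sub_C _).mul hm2
      have hdmul : ((X - C (2 * π ^ 2 / ((4 * (k : ℝ) + 5) * (4 * (k : ℝ) + 9)))) *
          sPol (k + 1)).natDegree = k + 2 := by
        rw [(monic_X_sub_C _).natDegree_mul hm2, natDegree_X_sub_C, hd2]; omega
      have hlt : (C (π ^ 4 / ((4 * (k : ℝ) + 3) * (4 * (k : ℝ) + 5) ^ 2 * (4 * (k : ℝ) + 7))) *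
          sPol k).natDegree < ((X - C (2 * π ^ 2 / ((4 * (k : ℝ) + 5) * (4 * (k : ℝ) + 9)))) *
          sPol (k + 1)).natDegree := by
        refine lt_of_le_of_lt (natDegree_C_mul_le _ _) ?_
        rw [hd1, hdmul]; omega
      constructor
      · show ((X - C _) * sPol (k + 1) - C _ * sPol k).Monic
        exact hmul.sub_of_left (degree_lt_degree hlt)
      · show ((X - C _) * sPol (k + 1) - C _ * sPol k).natDegree = k + 2
        rw [natDegree_sub_eq_left_of_natDegree_lt hlt, hdmul]

/-- `s_n(z) = z^n S_{2n−1}(π/√z)` is, up to a nonzero normalization, a monic polynomial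
of degree `n` in `z`, and the monic normalizations `p n` satisfy the three-term
recursion `p_{k+1}(z) = (z − a_k) p_k(z) − b_k p_{k−1}(z)` with `a_0 = π²/15`,
`a_k = 2π²/((4k+1)(4k+5))` and `b_k = π⁴/((4k−1)(4k+1)²(4k+3))` for `k ≥ 1`.
Here `T (n+1) x = S_n(x)` encodes the sequence `S_{−1} = S_0 = 1`,
`S_{n+1}(x) = S_n(x) − (x²/((2n+3)(2n+5))) S_{n−1}(x)`. -/
theorem s_monic_three_term_recursion (T : ℕ → ℝ → ℝ)
    (hT0 : ∀ x, T 0 x = 1) (hT1 : ∀ x, T 1 x = 1)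
    (hTrec : ∀ (n : ℕ) (x : ℝ),
      T (n + 2) x = T (n + 1) x - x ^ 2 / ((2 * (n : ℝ) + 3) * (2 * (n : ℝ) + 5)) * T n x) :
    ∃ (p : ℕ → Polynomial ℝ) (c : ℕ → ℝ),
      (∀ n : ℕ, c n ≠ 0 ∧ (p n).Monic ∧ (p n).natDegree = n ∧
        ∀ z : ℝ, 0 < z → (p n).eval z = c n * (z ^ n * T (2 * n) (π / Real.sqrt z))) ∧
      p 1 = X - C (π ^ 2 / 15) ∧
      (∀ k : ℕ, 1 ≤ k →
        p (k + 1) =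
          (X - C (2 * π ^ 2 / ((4 * (k : ℝ) + 1) * (4 * (k : ℝ) + 5)))) * p k -
            C (π ^ 4 / ((4 * (k : ℝ) - 1) * (4 * (k : ℝ) + 1) ^ 2 * (4 * (k : ℝ) + 3))) *
              p (k - 1)) := by
  refine ⟨sPol, fun _ => 1, ?_, rfl, ?_⟩
  · intro n
    refine ⟨one_ne_zero, (sPol_monic_deg n).1, (sPol_monic_deg n).2, ?_⟩
    intro z hz
    have hs : Real.sqrt z > 0 := Real.sqrt_pos.mpr hz
    have hx2 : (π / Real.sqrt z) ^ 2 = π ^ 2 / z := by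
      rw [div_pow, Real.sq_sqrt hz.le]
    rw [one_mul]
    set x := π / Real.sqrt z with hxdef
    clear_value x
    induction n using Nat.twoStepInduction with
    | zero => simp [sPol, hT0]
    | one =>
        have h2 : T 2 x = T 1 x - x ^ 2 / ((2 * ((0 : ℕ) : ℝ) + 3) * (2 * ((0 : ℕ) : ℝ) + 5)) *
            T 0 x := hTrec 0 x
        simp only [Nat.cast_zero] at h2
        rw [hT0, hT1] at h2
        show (X - C (π ^ 2 / 15)).eval z = z ^ 1 * T 2 x
        rw [h2, hx2]
        have hz' : z ≠ 0 := ne_of_gt hz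
        simp only [eval_sub, eval_X, eval_C]
        field_simp
        ring
    | more k ih1 ih2 =>
        have e1 : T (2 * k + 4) x = T (2 * k + 3) x -
            x ^ 2 / ((4 * (k : ℝ) + 7) * (4 * (k : ℝ) + 9)) * T (2 * k + 2) x := by
          have := hTrec (2 * k + 2) x
          push_cast at this
          convert this using 3 <;> push_cast <;> ring
        have e2 : T (2 * k + 3) x = T (2 * k + 2) x -
            x ^ 2 / ((4 * (k : ℝ) + 5) * (4 * (k : ℝ) + 7)) * T (2 * k + 1) x := by
          have := hTrec (2 * k + 1) x
          push_cast at this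
          convert this using 3 <;> push_cast <;> ring
        have e3 : T (2 * k + 2) x = T (2 * k + 1) x -
            x ^ 2 / ((4 * (k : ℝ) + 3) * (4 * (k : ℝ) + 5)) * T (2 * k) x := by
          have := hTrec (2 * k) x
          push_cast at this
          convert this using 3 <;> push_cast <;> ring
        have ih1' := ih1
        have ih2' := ih2
        simp only [Nat.mul_succ] at *
        -- ih1 : eval z (sPol k) = z ^ k * T (2*k) x
        -- ih2 : eval z (sPol (k+1)) = z ^ (k+1) * T (2*k+2) x
        have hz' : z ≠ 0 := ne_of_gt hz
        have h3 : (4 * (k : ℝ) + 3) ≠ 0 := by positivity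
        have h5 : (4 * (k : ℝ) + 5) ≠ 0 := by positivity
        have h7 : (4 * (k : ℝ) + 7) ≠ 0 := by positivity
        have h9 : (4 * (k : ℝ) + 9) ≠ 0 := by positivity
        show ((X - C (2 * π ^ 2 / ((4 * (k : ℝ) + 5) * (4 * (k : ℝ) + 9)))) * sPol (k + 1) -
            C (π ^ 4 / ((4 * (k : ℝ) + 3) * (4 * (k : ℝ) + 5) ^ 2 * (4 * (k : ℝ) + 7))) *
            sPol k).eval z = z ^ (k + 2) * T (2 * k + 4) x
        simp only [eval_sub, eval_mul, eval_X, eval_C]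
        rw [ih1', ih2', e1, e2, e3, hx2]
        field_simp
        ring
  · intro k hk
    obtain ⟨j, rfl⟩ := Nat.exists_eq_add_of_le hk
    have c1 : 4 * ((1 + j : ℕ) : ℝ) + 1 = 4 * (j : ℝ) + 5 := by push_cast; ring
    have c2 : 4 * ((1 + j : ℕ) : ℝ) + 5 = 4 * (j : ℝ) + 9 := by push_cast; ring
    have c3 : 4 * ((1 + j : ℕ) : ℝ) - 1 = 4 * (j : ℝ) + 3 := by push_cast; ring
    have c4 : 4 * ((1 + j : ℕ) : ℝ) + 3 = 4 * (j : ℝ) + 7 := by push_cast; ring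
    rw [c1, c2, c3, c4]
    have hidx : 1 + j + 1 = j + 2 := by omega
    have hidx2 : 1 + j - 1 = j := by omega
    have hidx3 : 1 + j = j + 1 := by omega
    rw [hidx, hidx2, hidx3]
    rfl
end

section
/- All zeros of the polynomial s_n(z) = z^n S_{2n−1}(π/√z) are real and positive, and they are simple. -/
/-!
With `g m = π² / ((2m+1)(2m+3))` for `m ≥ 1` and `g 0 = 0`, the recurrence for
`u_m = S_{m-1}(x)` reads `u_{m+2} = u_{m+1} - (g_{m+1} / z) u_m` in the variable `z = π² / x²`.
Eliminating the odd terms gives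
`s_{k+1} = (z - g_{2k} - g_{2k+1}) s_k - g_{2k-1} g_{2k} s_{k-1}` for the even ones: the `s_n`
are monic polynomials obeying a three-term recurrence with positive coupling coefficients, so
the zeros of consecutive ones interlace and are real and simple. Moreover the splitting of the
recurrence coefficients into the nonnegative `g`'s forces `(-1)^k s_k > 0` on `(-∞, 0]`, so the
zeros are positive.
-/

open Real Polynomial Filter

lemma neg_one_pow_add_mul_prod_pos {k i : ℕ} (hi : i ≤ k) {f : Fin k → ℝ}
    (hpos : ∀ j : Fin k, (j : ℕ) < i → 0 < f j) (hneg : ∀ j : Fin k, i ≤ j → f j < 0) :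
    0 < (-1) ^ (k + i) * ∏ j, f j := by
  induction k with
  | zero => simp [Nat.le_zero.mp hi]
  | succ k ih =>
    rw [Fin.prod_univ_castSucc]
    rcases hi.lt_or_eq with hi | rfl
    · have hrest := ih (by omega) (fun j hj => hpos _ hj) (fun j hj => hneg j.castSucc hj)
      have hlast := hneg (Fin.last k) (by simp; omega)
      rw [add_right_comm, pow_succ]
      nlinarith
    · have hrest : 0 < ∏ j : Fin k, f j.castSucc :=
        Finset.prod_pos fun j _ => hpos _ (by simp)
      have hlast := hpos (Fin.last k) (by simp)
      rw [← two_mul, (even_two_mul _).neg_one_pow, one_mul]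
      positivity

lemma exists_zero_between_of_alternating_sign {f : ℝ → ℝ} (hf : Continuous f) {m N : ℕ}
    {x : Fin (m + 1) → ℝ} (hx : StrictMono x)
    (hsign : ∀ i : Fin (m + 1), 0 < (-1) ^ (N + (i : ℕ)) * f (x i)) :
    ∃ y : Fin m → ℝ, ∀ i, x i.castSucc < y i ∧ y i < x i.succ ∧ f (y i) = 0 := by
  have h : ∀ i : Fin m, ∃ y, x i.castSucc < y ∧ y < x i.succ ∧ f y = 0 := by
    intro i
    have hlt := hx (Fin.castSucc_lt_succ (i := i))
    have h₁ := hsign i.castSucc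
    have h₂ := hsign i.succ
    rw [Fin.val_castSucc] at h₁
    rw [Fin.val_succ, ← add_assoc, pow_succ] at h₂
    have hcont := hf.continuousOn (s := Set.Icc (x i.castSucc) (x i.succ))
    rcases neg_one_pow_eq_or ℝ (N + i) with hs | hs <;> rw [hs] at h₁ h₂
    · obtain ⟨y, hy, hy0⟩ := intermediate_value_Ioo' hlt.le hcont (show (0 : ℝ) ∈ _ by
        constructor <;> linarith)
      exact ⟨y, hy.1, hy.2, hy0⟩
    · obtain ⟨y, hy, hy0⟩ := intermediate_value_Ioo hlt.le hcont (show (0 : ℝ) ∈ _ by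
        constructor <;> linarith)
      exact ⟨y, hy.1, hy.2, hy0⟩
  choose y hy using h
  exact ⟨y, hy⟩

lemma Fin.strictMono_snoc_of_lt {α : Type*} [Preorder α] {n : ℕ} {f : Fin n → α} {b : α}
    (hf : StrictMono f) (hb : ∀ j, f j < b) : StrictMono (Fin.snoc f b : Fin (n + 1) → α) := by
  intro i j hij
  induction j using Fin.lastCases with
  | last =>
    induction i using Fin.lastCases with
    | last => exact absurd hij (lt_irrefl _)
    | cast i => simpa using hb i
  | cast j =>
    induction i using Fin.lastCases with
    | last => exact absurd hij (not_lt.2 (Fin.le_last _))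
    | cast i => simpa using hf (Fin.castSucc_lt_castSucc_iff.1 hij)

namespace Polynomial.Monic

variable {f : ℝ[X]}

lemma eventually_eval_pos (hf : f.Monic) (hd : 0 < f.natDegree) :
    ∀ᶠ t in atTop, 0 < f.eval t :=
  (f.tendsto_atTop_of_leadingCoeff_nonneg
    (by rwa [degree_eq_natDegree hf.ne_zero, Nat.cast_pos])
    (by simp [hf.leadingCoeff])).eventually_gt_atTop 0

lemma eventually_neg_one_pow_mul_eval_pos (hf : f.Monic) (hd : 0 < f.natDegree) :
    ∀ᶠ t in atBot, 0 < (-1) ^ f.natDegree * f.eval t := by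
  have hg : (C ((-1) ^ f.natDegree) * f.comp (-X)).Monic := by
    rw [Monic, leadingCoeff_mul, leadingCoeff_C, comp_neg_X_leadingCoeff_eq, hf.leadingCoeff,
      ← mul_assoc, ← mul_pow]; simp
  have hgd : (C ((-1) ^ f.natDegree) * f.comp (-X)).natDegree = f.natDegree := by
    rw [natDegree_C_mul (by simp), natDegree_comp]; simp
  filter_upwards [tendsto_neg_atBot_atTop.eventually
    (hg.eventually_eval_pos (by rw [hgd]; exact hd))] with t ht
  simpa using ht

lemma eq_prod_X_sub_C_of_injective {K : Type*} [Field K] {f : K[X]} (hf : f.Monic) {k : ℕ}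
    (hdeg : f.natDegree = k) {r : Fin k → K} (hr : Function.Injective r)
    (hroot : ∀ i, f.eval (r i) = 0) : f = ∏ i, (X - C (r i)) := by
  have hprod : (∏ i, (X - C (r i))).Monic := monic_prod_of_monic _ _ fun i _ => monic_X_sub_C _
  have hprod_deg : (∏ i, (X - C (r i))).natDegree = k := by
    rw [natDegree_prod_of_monic _ _ fun i _ => monic_X_sub_C _]; simp
  refine eq_of_degree_sub_lt_of_eval_index_eq (s := Finset.univ) hr.injOn ?_ ?_
  · rw [Finset.card_univ, Fintype.card_fin]
    calc (f - ∏ i, (X - C (r i))).degree < f.degree :=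
          degree_sub_lt_left
            (by rw [degree_eq_natDegree hf.ne_zero, degree_eq_natDegree hprod.ne_zero, hdeg,
              hprod_deg])
            hf.ne_zero (by rw [hf.leadingCoeff, hprod.leadingCoeff])
      _ = k := by rw [degree_eq_natDegree hf.ne_zero, hdeg]
  · intro i _
    rw [hroot, eval_prod]
    exact (Finset.prod_eq_zero (Finset.mem_univ i) (by simp)).symm

end Polynomial.Monic

lemma roots_map_prod_X_sub_C {n : ℕ} (r : Fin n → ℝ) :
    ((∏ i, (X - C (r i))).map (algebraMap ℝ ℂ)).roots =
      Finset.univ.val.map fun i => (r i : ℂ) := by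
  simp only [Polynomial.map_prod, Polynomial.map_sub, map_X, map_C, Complex.coe_algebraMap]
  rw [Finset.prod_eq_multiset_prod]
  have h := roots_multiset_prod_X_sub_C (Finset.univ.val.map fun i => (r i : ℂ))
  rwa [Multiset.map_map] at h

noncomputable def threeTermPoly (a b : ℕ → ℝ) : ℕ → ℝ[X]
  | 0 => 1
  | 1 => X - C (a 0)
  | k + 2 => (X - C (a (k + 1))) * threeTermPoly a b (k + 1) - C (b k) * threeTermPoly a b k

section ThreeTermRecurrence

variable (a b : ℕ → ℝ)

lemma eval_threeTermPoly_add_two (k : ℕ) (t : ℝ) :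
    (threeTermPoly a b (k + 2)).eval t =
      (t - a (k + 1)) * (threeTermPoly a b (k + 1)).eval t -
        b k * (threeTermPoly a b k).eval t := by
  simp [threeTermPoly]

lemma monic_threeTermPoly_and_natDegree (k : ℕ) :
    (threeTermPoly a b k).Monic ∧ (threeTermPoly a b k).natDegree = k := by
  induction k using Nat.twoStepInduction with
  | zero => exact ⟨monic_one, natDegree_one⟩
  | one => exact ⟨monic_X_sub_C _, natDegree_X_sub_C _⟩
  | more k ih₀ ih₁ =>
    have hmul : ((X - C (a (k + 1))) * threeTermPoly a b (k + 1)).Monic :=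
      (monic_X_sub_C _).mul ih₁.1
    have hmul_deg : ((X - C (a (k + 1))) * threeTermPoly a b (k + 1)).natDegree = k + 2 := by
      rw [(monic_X_sub_C _).natDegree_mul ih₁.1, natDegree_X_sub_C, ih₁.2]; ring
    have hlt : (C (b k) * threeTermPoly a b k).natDegree < k + 2 :=
      (natDegree_C_mul_le _ _).trans_lt (by omega)
    rw [← hmul_deg] at hlt
    refine ⟨hmul.sub_of_left (degree_lt_degree hlt), ?_⟩
    rw [threeTermPoly, natDegree_sub_eq_left_of_natDegree_lt hlt, hmul_deg]

variable {a b}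

lemma exists_alternating_points_threeTermPoly {k : ℕ} {r : Fin (k + 1) → ℝ} (hr : StrictMono r)
    (hroot : ∀ i, (threeTermPoly a b (k + 1)).eval (r i) = 0) (hb : 0 < b k)
    (hsign : ∀ i : Fin (k + 1), 0 < (-1) ^ (k + (i : ℕ)) * (threeTermPoly a b k).eval (r i)) :
    ∃ x : Fin (k + 3) → ℝ, StrictMono x ∧ (∀ j, x j.succ.castSucc = r j) ∧
      ∀ i : Fin (k + 3), 0 < (-1) ^ (k + (i : ℕ)) * (threeTermPoly a b (k + 2)).eval (x i) := by
  obtain ⟨hmonic, hdeg⟩ := monic_threeTermPoly_and_natDegree a b (k + 2)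
  obtain ⟨A, hA, hAr⟩ := ((hmonic.eventually_neg_one_pow_mul_eval_pos (by omega)).and
    (eventually_lt_atBot (r 0))).exists
  obtain ⟨B, hB, hBr⟩ := ((hmonic.eventually_eval_pos (by omega)).and
    (eventually_gt_atTop (r (Fin.last k)))).exists
  refine ⟨Fin.snoc (Fin.cons A r) B, ?_, fun j => by rw [Fin.snoc_castSucc, Fin.cons_succ],
    fun i => ?_⟩
  · refine Fin.strictMono_snoc_of_lt (Fin.strictMono_cons.2 ⟨fun j => ?_, hr⟩) fun j => ?_
    · exact hAr.trans_le (hr.monotone (Fin.zero_le j))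
    · induction j using Fin.cases with
      | zero => simpa using hAr.trans (hr.monotone (Fin.zero_le _) |>.trans_lt hBr)
      | succ j => simpa using (hr.monotone (Fin.le_last j)).trans_lt hBr
  induction i using Fin.lastCases with
  | last =>
    rw [Fin.snoc_last, Fin.val_last, Even.neg_one_pow ⟨k + 1, by ring⟩, one_mul]
    exact hB
  | cast i =>
    induction i using Fin.cases with
    | zero =>
      rw [hdeg, pow_add, neg_one_sq, mul_one] at hA
      simpa using hA
    | succ j =>
      have h := hsign j
      simp only [Fin.snoc_castSucc, Fin.cons_succ, Fin.val_castSucc, Fin.val_succ]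
      rw [eval_threeTermPoly_add_two, hroot, ← add_assoc, pow_succ]
      nlinarith

lemma threeTermPoly_interlacing_step {k : ℕ} {r : Fin (k + 1) → ℝ} (hr : StrictMono r)
    (hfac : threeTermPoly a b (k + 1) = ∏ i, (X - C (r i))) (hb : 0 < b k)
    (hsign : ∀ i : Fin (k + 1), 0 < (-1) ^ (k + (i : ℕ)) * (threeTermPoly a b k).eval (r i)) :
    ∃ s : Fin (k + 2) → ℝ, StrictMono s ∧ threeTermPoly a b (k + 2) = ∏ i, (X - C (s i)) ∧
      ∀ i : Fin (k + 2), 0 < (-1) ^ (k + 1 + (i : ℕ)) * (threeTermPoly a b (k + 1)).eval (s i) := by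
  have hroot : ∀ i, (threeTermPoly a b (k + 1)).eval (r i) = 0 := fun i => by
    rw [hfac, eval_prod]
    exact Finset.prod_eq_zero (Finset.mem_univ i) (by simp)
  obtain ⟨x, hx, hxr, hxsign⟩ := exists_alternating_points_threeTermPoly hr hroot hb hsign
  obtain ⟨s, hs⟩ := exists_zero_between_of_alternating_sign (threeTermPoly a b (k + 2)).continuous
    hx hxsign
  have hs_mono : StrictMono s := Fin.strictMono_iff_lt_succ.2 fun i =>
    (hs i.castSucc).2.1.trans (by rw [Fin.succ_castSucc]; exact (hs i.succ).1)
  obtain ⟨hmonic, hdeg⟩ := monic_threeTermPoly_and_natDegree a b (k + 2)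
  refine ⟨s, hs_mono, hmonic.eq_prod_X_sub_C_of_injective hdeg hs_mono.injective
    fun i => (hs i).2.2, fun i => ?_⟩
  rw [hfac, eval_prod]
  simp only [eval_sub, eval_X, eval_C]
  refine neg_one_pow_add_mul_prod_pos i.is_le (fun j hj => ?_) (fun j hj => ?_)
  · have : x j.succ.castSucc ≤ x i.castSucc := hx.monotone (by simpa [Fin.le_iff_val_le_val])
    linarith [hxr j, (hs i).1]
  · have : x i.succ ≤ x j.succ.castSucc := hx.monotone (by simpa [Fin.le_iff_val_le_val])
    linarith [hxr j, (hs i).2.1]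

/-- `(-1) ^ (k + i)` is the sign `(-1) ^ (k - i)` without truncated subtraction: `p k` alternates
in sign along the roots of `p (k + 1)`, i.e. the roots of consecutive polynomials interlace. -/
theorem exists_interlacing_roots_threeTermPoly (hb : ∀ k, 0 < b k) (k : ℕ) :
    ∃ r : Fin (k + 1) → ℝ, StrictMono r ∧ threeTermPoly a b (k + 1) = ∏ i, (X - C (r i)) ∧
      ∀ i : Fin (k + 1), 0 < (-1) ^ (k + (i : ℕ)) * (threeTermPoly a b k).eval (r i) := by
  induction k with
  | zero => exact ⟨![a 0], strictMono_vecEmpty, by simp [threeTermPoly], by simp [threeTermPoly]⟩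
  | succ k ih =>
    obtain ⟨r, hr, hfac, hsign⟩ := ih
    exact threeTermPoly_interlacing_step hr hfac (hb k) hsign

theorem exists_strictMono_threeTermPoly_eq_prod (hb : ∀ k, 0 < b k) (k : ℕ) :
    ∃ r : Fin k → ℝ, StrictMono r ∧ threeTermPoly a b k = ∏ i, (X - C (r i)) := by
  cases k with
  | zero => exact ⟨Fin.elim0, Subsingleton.strictMono _, by simp [threeTermPoly]⟩
  | succ k =>
    obtain ⟨r, hr, hfac, -⟩ := exists_interlacing_roots_threeTermPoly hb k
    exact ⟨r, hr, hfac⟩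

end ThreeTermRecurrence

noncomputable def evenPartPoly (g : ℕ → ℝ) : ℕ → ℝ[X] :=
  threeTermPoly (fun k => g (2 * k) + g (2 * k + 1)) (fun k => g (2 * k + 1) * g (2 * k + 2))

section EvenPart

variable {g : ℕ → ℝ}

theorem neg_one_pow_mul_eval_evenPartPoly_pos (hg_even : ∀ k, 0 ≤ g (2 * k))
    (hg_odd : ∀ k, 0 < g (2 * k + 1)) {t : ℝ} (ht : t ≤ 0) (k : ℕ) :
    0 < (-1) ^ k * (evenPartPoly g k).eval t := by
  set w : ℕ → ℝ := fun k => (-1) ^ k * (evenPartPoly g k).eval t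
  suffices h : ∀ k, 0 < w k ∧ (g (2 * k + 1) - t) * w k ≤ w (k + 1) from (h k).1
  intro k
  induction k with
  | zero =>
    have h₀ : 0 ≤ g 0 := hg_even 0
    have hw₀ : w 0 = 1 := by simp [w, evenPartPoly, threeTermPoly]
    have hw₁ : w 1 = g 0 + g 1 - t := by simp [w, evenPartPoly, threeTermPoly]
    rw [hw₀, hw₁]
    exact ⟨one_pos, by linarith⟩
  | succ k ih =>
    obtain ⟨hw, hle⟩ := ih
    have hw₁ : 0 < w (k + 1) := (mul_pos (by linarith [hg_odd k]) hw).trans_le hle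
    have hrec : w (k + 2) = (g (2 * k + 2) + g (2 * k + 3) - t) * w (k + 1)
        - g (2 * k + 1) * g (2 * k + 2) * w k := by
      simp only [w, evenPartPoly, eval_threeTermPoly_add_two]
      ring_nf
    refine ⟨hw₁, ?_⟩
    have h₂ : 0 ≤ g (2 * k + 2) := hg_even (k + 1)
    rw [hrec, (by ring : 2 * (k + 1) + 1 = 2 * k + 3)]
    nlinarith [mul_le_mul_of_nonneg_left hle h₂,
      mul_nonneg (mul_nonneg h₂ (neg_nonneg.2 ht)) hw.le]

theorem eval_evenPartPoly_eq_pow_mul (hg₀ : g 0 = 0) {z : ℝ} (hz : z ≠ 0) {u : ℕ → ℝ}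
    (hu₀ : u 0 = 1) (hu₁ : u 1 = 1) (hu : ∀ m, u (m + 2) = u (m + 1) - g (m + 1) / z * u m)
    (k : ℕ) : (evenPartPoly g k).eval z = z ^ k * u (2 * k) := by
  induction k using Nat.twoStepInduction with
  | zero => simp [evenPartPoly, threeTermPoly, hu₀]
  | one =>
    simp only [evenPartPoly, threeTermPoly, eval_sub, eval_X, eval_C, hu 0, hu₀, hu₁, hg₀]
    field_simp
    ring
  | more k ih₀ ih₁ =>
    simp only [evenPartPoly] at ih₀ ih₁ ⊢
    rw [eval_threeTermPoly_add_two, ih₀, ih₁]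
    have e₁ : u (2 * k + 4) = u (2 * k + 3) - g (2 * k + 3) / z * u (2 * k + 2) := hu (2 * k + 2)
    have e₂ : u (2 * k + 3) = u (2 * k + 2) - g (2 * k + 2) / z * u (2 * k + 1) := hu (2 * k + 1)
    have e₃ : u (2 * k + 2) = u (2 * k + 1) - g (2 * k + 1) / z * u (2 * k) := hu (2 * k)
    rw [show 2 * (k + 2) = 2 * k + 4 by ring, show 2 * (k + 1) = 2 * k + 2 by ring, e₁, e₂]
    field_simp at e₃ ⊢
    linear_combination (-z ^ (k + 1) * g (2 * k + 2)) * e₃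

end EvenPart

noncomputable def stieltjesCoeff : ℕ → ℝ
  | 0 => 0
  | m + 1 => π ^ 2 / ((2 * m + 3) * (2 * m + 5))

lemma stieltjesCoeff_nonneg (m : ℕ) : 0 ≤ stieltjesCoeff m := by
  cases m
  · rfl
  · simp only [stieltjesCoeff]; positivity

lemma stieltjesCoeff_succ_pos (m : ℕ) : 0 < stieltjesCoeff (m + 1) := by
  simp only [stieltjesCoeff]; positivity

lemma eval_evenPartPoly_stieltjesCoeff {T : ℕ → ℝ → ℝ} (hT0 : ∀ x, T 0 x = 1)
    (hT1 : ∀ x, T 1 x = 1)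
    (hTrec : ∀ (n : ℕ) (x : ℝ),
      T (n + 2) x = T (n + 1) x - x ^ 2 / ((2 * (n : ℝ) + 3) * (2 * (n : ℝ) + 5)) * T n x)
    (n : ℕ) {z : ℝ} (hz : 0 < z) :
    (evenPartPoly stieltjesCoeff n).eval z = z ^ n * T (2 * n) (π / √z) := by
  refine eval_evenPartPoly_eq_pow_mul (u := fun m => T m (π / √z)) rfl hz.ne' (hT0 _) (hT1 _)
    (fun m => ?_) n
  rw [hTrec, div_pow, sq_sqrt hz.le]
  simp only [stieltjesCoeff]
  ring

/-- `T (m + 1) = S_m`, so `T (2 * n) = S_{2n-1}`. -/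
theorem s_zeros_real_positive_simple_general (T : ℕ → ℝ → ℝ)
    (hT0 : ∀ x, T 0 x = 1) (hT1 : ∀ x, T 1 x = 1)
    (hTrec : ∀ (n : ℕ) (x : ℝ),
      T (n + 2) x = T (n + 1) x - x ^ 2 / ((2 * (n : ℝ) + 3) * (2 * (n : ℝ) + 5)) * T n x)
    (n : ℕ) (p : Polynomial ℝ)
    (hpe : ∀ z : ℝ, 0 < z → p.eval z = z ^ n * T (2 * n) (π / Real.sqrt z)) :
    (∀ w ∈ (p.map (algebraMap ℝ ℂ)).roots, ∃ r : ℝ, 0 < r ∧ w = (r : ℂ)) ∧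
      (p.map (algebraMap ℝ ℂ)).roots.Nodup := by
  have hp_eq : p = evenPartPoly stieltjesCoeff n :=
    eq_of_infinite_eval_eq _ _ ((Set.Ioi_infinite 0).mono fun z hz => by
      show p.eval z = _
      rw [hpe z hz, eval_evenPartPoly_stieltjesCoeff hT0 hT1 hTrec n hz])
  obtain ⟨r, hr, hfac⟩ := exists_strictMono_threeTermPoly_eq_prod
    (fun k => mul_pos (stieltjesCoeff_succ_pos _) (stieltjesCoeff_succ_pos _)) n
  have hr_pos : ∀ i, 0 < r i := fun i => by
    by_contra! hri
    have hsign := neg_one_pow_mul_eval_evenPartPoly_pos (g := stieltjesCoeff)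
      (fun k => stieltjesCoeff_nonneg _) (fun k => stieltjesCoeff_succ_pos _) hri n
    rw [evenPartPoly, hfac, eval_prod, Finset.prod_eq_zero (Finset.mem_univ i) (by simp),
      mul_zero] at hsign
    exact lt_irrefl _ hsign
  rw [hp_eq, evenPartPoly, hfac, roots_map_prod_X_sub_C]
  refine ⟨fun w hw => ?_, (Multiset.nodup_map_iff_of_injective ?_).2 Finset.univ.nodup⟩
  · obtain ⟨i, -, rfl⟩ := Multiset.mem_map.1 hw
    exact ⟨r i, hr_pos i, rfl⟩
  · exact Complex.ofReal_injective.comp hr.injective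

/-- All zeros of the polynomial `s_n(z) = z^n S_{2n−1}(π/√z)` are real, positive and
simple.  Here `T (n+1) x = S_n(x)` encodes `S_{−1} = S_0 = 1`,
`S_{n+1}(x) = S_n(x) − (x²/((2n+3)(2n+5))) S_{n−1}(x)`, and `p` is any nonzero real
polynomial agreeing with `s_n` on `(0, ∞)`. -/
theorem s_zeros_real_positive_simple (T : ℕ → ℝ → ℝ)
    (hT0 : ∀ x, T 0 x = 1) (hT1 : ∀ x, T 1 x = 1)
    (hTrec : ∀ (n : ℕ) (x : ℝ),
      T (n + 2) x = T (n + 1) x - x ^ 2 / ((2 * (n : ℝ) + 3) * (2 * (n : ℝ) + 5)) * T n x)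
    (n : ℕ) (p : Polynomial ℝ) (hp : p ≠ 0)
    (hpe : ∀ z : ℝ, 0 < z → p.eval z = z ^ n * T (2 * n) (π / Real.sqrt z)) :
    (∀ w ∈ (p.map (algebraMap ℝ ℂ)).roots, ∃ r : ℝ, 0 < r ∧ w = (r : ℂ)) ∧
      (p.map (algebraMap ℝ ℂ)).roots.Nodup :=
  s_zeros_real_positive_simple_general T hT0 hT1 hTrec n p hpe
end
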